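/- arXiv:1401.7099 — 4 statements merged into one kernel-verified Lean document; each statement's English description precedes it below -/
import Mathlib

section
/- Let v be a rational vector in Q^n with denominator q (qv ∈ Z^n). For any continuous function f : T^n → R and any translation-invariant sup norm, the solution g(θ) = q ∫_0^1 (f - [f]_v)(θ + t q v) t dt of the equation L_v g = f - [f]_v satisfies ‖g‖_∞ ≤ q · ‖f - [f]_v‖_∞ ≤ 2q ‖f‖_∞. In particular the inverse of L_v on functions with zero v-average is a bounded operator with norm at most q. -/
lemma abs_intervalIntegral_zero_one_mul_id_le {φ : ℝ → ℝ} {M : ℝ} (hφ : ∀ t, |φ t| ≤ M) :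
    |∫ t in (0:ℝ)..1, φ t * t| ≤ M := by
  have hM : 0 ≤ M := (abs_nonneg _).trans (hφ 0)
  have hbound : ∀ t ∈ Set.uIoc (0:ℝ) 1, ‖φ t * t‖ ≤ M := by
    intro t ht
    rw [Set.uIoc_of_le zero_le_one] at ht
    rw [Real.norm_eq_abs, abs_mul, abs_of_pos ht.1]
    calc |φ t| * t ≤ M * 1 := mul_le_mul (hφ t) ht.2 ht.1.le hM
      _ = M := mul_one M
  simpa using intervalIntegral.norm_integral_le_of_norm_le_const hbound

lemma abs_intervalIntegral_zero_one_le {φ : ℝ → ℝ} {M : ℝ} (hφ : ∀ t, |φ t| ≤ M) :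
    |∫ t in (0:ℝ)..1, φ t| ≤ M := by
  simpa using intervalIntegral.norm_integral_le_of_norm_le_const (a := 0) (b := 1) (f := φ)
    fun t _ => hφ t

theorem stmt1_general (n : ℕ) (v : Fin n → ℝ) (q : ℕ)
    (f : (Fin n → ℝ) → ℝ)
    (favg g : (Fin n → ℝ) → ℝ)
    (hfavg : ∀ θ, favg θ = ∫ t in (0:ℝ)..1, f (θ + (t * q) • v))
    (hg : ∀ θ, g θ = (q : ℝ) *
      ∫ t in (0:ℝ)..1, (f (θ + (t * q) • v) - favg (θ + (t * q) • v)) * t) :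
    (∀ M : ℝ, (∀ θ, |f θ - favg θ| ≤ M) → ∀ θ, |g θ| ≤ (q : ℝ) * M) ∧
    (∀ M : ℝ, (∀ θ, |f θ| ≤ M) → ∀ θ, |f θ - favg θ| ≤ 2 * M) := by
  refine ⟨fun M hM θ => ?_, fun M hM θ => ?_⟩
  · rw [hg θ, abs_mul, Nat.abs_cast]
    gcongr
    exact abs_intervalIntegral_zero_one_mul_id_le fun t => hM _
  · have hfavg_le : |favg θ| ≤ M := by
      rw [hfavg θ]
      exact abs_intervalIntegral_zero_one_le fun t => hM _
    calc |f θ - favg θ| ≤ |f θ| + |favg θ| := abs_sub _ _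
      _ ≤ 2 * M := by linarith [hM θ]

/-- the solution `g` of the cohomological equation `L_v g = f - [f]_v`
given by `g θ = q ∫_0^1 (f - [f]_v)(θ + t q v) t dt` satisfies
`‖g‖_∞ ≤ q ‖f - [f]_v‖_∞ ≤ 2 q ‖f‖_∞`: the inverse of `L_v` on functions with zero
`v`-average is bounded with norm at most `q`. -/
theorem stmt1 (n : ℕ) (v : Fin n → ℝ) (q : ℕ) (hq : 1 ≤ q)
    (hv : ∀ i, ∃ m : ℤ, (q : ℝ) * v i = (m : ℝ))
    (f : (Fin n → ℝ) → ℝ) (hf : Continuous f)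
    (hper : ∀ (θ : Fin n → ℝ) (k : Fin n → ℤ), f (θ + fun i => (k i : ℝ)) = f θ)
    (favg g : (Fin n → ℝ) → ℝ)
    (hfavg : ∀ θ, favg θ = ∫ t in (0:ℝ)..1, f (θ + (t * q) • v))
    (hg : ∀ θ, g θ = (q : ℝ) *
      ∫ t in (0:ℝ)..1, (f (θ + (t * q) • v) - favg (θ + (t * q) • v)) * t) :
    (∀ M : ℝ, (∀ θ, |f θ - favg θ| ≤ M) → ∀ θ, |g θ| ≤ (q : ℝ) * M) ∧
    (∀ M : ℝ, (∀ θ, |f θ| ≤ M) → ∀ θ, |f θ - favg θ| ≤ 2 * M) :=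
  stmt1_general n v q f favg g hfavg hg
end

section
/- (Quantitative inverse function theorem) Let O_h = {ω ∈ C^n : |ω − ω₀|_∞ < h} and let f : O_h → C^n be holomorphic with |f − Id|_h ≤ δ ≤ h/4, where |f − Id|_h = sup_{ω ∈ O_h} |f(ω) − ω|_∞. Then f has a holomorphic inverse φ : O_{h/4} → O_h satisfying f ∘ φ = Id on O_{h/4}, with the estimates |φ − Id|_{h/4} ≤ δ and (h/4)·|Dφ − Id|_{h/4} ≤ δ. -/
/-!
Write `f = id + g` with `‖g‖ ≤ δ` on `O_h`. The one-variable Cauchy estimate along complex lines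
gives `‖Dg‖ ≤ 2δ/h` on `O_{h/2}`, so `g` is a `1/2`-contraction there. For `ω ∈ O_{h/4}` the map
`x ↦ ω - g x` sends `closedBall ω δ ⊆ O_{h/2}` into itself, and its fixed point is `φ ω`, with
`‖φ ω - ω‖ ≤ δ`. The relation `φ = id - g ∘ φ` makes `φ` Lipschitz, hence differentiable with
`Dφ = (1 + Dg)⁻¹`, and `‖(1 + A)⁻¹ - 1‖ ≤ 2‖A‖ ≤ 4δ/h` for `‖A‖ ≤ 1/2`.
-/

open Metric Set Filter NNReal

theorem Complex.norm_fderiv_le_of_forall_mem_closedBall_norm_le {E F : Type*}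
    [NormedAddCommGroup E] [NormedSpace ℂ E] [NormedAddCommGroup F] [NormedSpace ℂ F]
    {g : E → F} {x : E} {a δ : ℝ} (ha : 0 < a) (hg : DifferentiableOn ℂ g (closedBall x a))
    (hb : ∀ y ∈ closedBall x a, ‖g y‖ ≤ δ) :
    ‖fderiv ℂ g x‖ ≤ δ / a := by
  have hδ : 0 ≤ δ := (norm_nonneg _).trans (hb x (mem_closedBall_self ha.le))
  refine ContinuousLinearMap.opNorm_le_bound _ (by positivity) fun v => ?_
  rcases eq_or_ne v 0 with rfl | hv
  · simp
  have hv0 : 0 < ‖v‖ := norm_pos_iff.2 hv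
  set L : ℂ → E := fun t => x + t • v
  have hL : ∀ t, HasDerivAt L v t := fun t => by
    have := ((hasDerivAt_id t).smul_const v).const_add x
    rwa [one_smul] at this
  have hmaps : MapsTo L (closedBall 0 (a / ‖v‖)) (closedBall x a) := fun t ht => by
    rw [mem_closedBall_zero_iff, le_div_iff₀ hv0] at ht
    simpa [L, norm_smul] using ht
  have hgL : DiffContOnCl ℂ (g ∘ L) (ball 0 (a / ‖v‖)) := by
    refine DifferentiableOn.diffContOnCl ?_
    rw [closure_ball _ (by positivity)]
    exact hg.comp (fun t _ => (hL t).differentiableAt.differentiableWithinAt) hmaps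
  have hderiv : HasDerivAt (g ∘ L) (fderiv ℂ g x v) 0 := by
    have hgx : DifferentiableAt ℂ g (L 0) := by
      simpa [L] using hg.differentiableAt (closedBall_mem_nhds x ha)
    simpa [L] using hgx.hasFDerivAt.comp_hasDerivAt 0 (hL 0)
  have hcauchy := Complex.norm_deriv_le_of_forall_mem_sphere_norm_le (by positivity) hgL
    fun t ht => hb _ (hmaps (sphere_subset_closedBall ht))
  rw [hderiv.deriv, div_div_eq_mul_div] at hcauchy
  simpa [div_mul_eq_mul_div] using hcauchy

section Contraction

variable {E : Type*} [NormedAddCommGroup E]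

theorem exists_add_eq_of_lipschitzOnWith [CompleteSpace E] {g : E → E} {s : Set E} {K : ℝ≥0}
    {y x₀ : E} (hK : K < 1) (hs : IsClosed s) (hx₀ : x₀ ∈ s) (hg : LipschitzOnWith K g s)
    (hmaps : MapsTo (fun x => y - g x) s s) :
    ∃ x ∈ s, x + g x = y := by
  have hT : LipschitzOnWith K (fun x => y - g x) s :=
    LipschitzOnWith.of_dist_le_mul fun a ha b hb => by
      rw [dist_sub_left]
      exact hg.dist_le_mul a ha b hb
  obtain ⟨x, hxs, hx, -⟩ := ContractingWith.exists_fixedPoint' hs.isComplete hmaps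
    ⟨hK, hT.mapsToRestrict hmaps⟩ hx₀ (edist_ne_top _ _)
  exact ⟨x, hxs, eq_sub_iff_add_eq.mp hx.eq.symm⟩

theorem lipschitzOnWith_of_add_eq {g φ : E → E} {s t : Set E} {K : ℝ≥0} (hK : K < 1)
    (hg : LipschitzOnWith K g s) (hφ : MapsTo φ t s) (hinv : ∀ y ∈ t, φ y + g (φ y) = y) :
    LipschitzOnWith (1 - K)⁻¹ φ t := by
  refine LipschitzOnWith.of_dist_le_mul fun y hy y' hy' => ?_
  have hdist : dist (φ y) (φ y') ≤ dist y y' + K * dist (φ y) (φ y') := by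
    calc dist (φ y) (φ y')
        = ‖(φ y + g (φ y) - (φ y' + g (φ y'))) - (g (φ y) - g (φ y'))‖ := by
          rw [dist_eq_norm]; congr 1; abel
      _ = ‖(y - y') - (g (φ y) - g (φ y'))‖ := by rw [hinv y hy, hinv y' hy']
      _ ≤ dist y y' + dist (g (φ y)) (g (φ y')) := by
          rw [dist_eq_norm, dist_eq_norm]; exact norm_sub_le _ _
      _ ≤ dist y y' + K * dist (φ y) (φ y') := by
          gcongr; exact hg.dist_le_mul _ (hφ hy) _ (hφ hy')
  have hK' : (0 : ℝ) < 1 - K := sub_pos.mpr (by exact_mod_cast hK)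
  rw [NNReal.coe_inv, NNReal.coe_sub hK.le, NNReal.coe_one, inv_mul_eq_div, le_div_iff₀ hK']
  linarith

end Contraction

theorem ContinuousLinearMap.norm_sub_one_le_of_mul_eq_one {𝕜 E : Type*} [NontriviallyNormedField 𝕜]
    [NormedAddCommGroup E] [NormedSpace 𝕜 E] {T B : E →L[𝕜] E} (hTB : T * B = 1)
    (hT : ‖T - 1‖ ≤ 1 / 2) : ‖B - 1‖ ≤ 2 * ‖T - 1‖ := by
  have hB : ‖B‖ ≤ ‖B - 1‖ + 1 := by
    calc ‖B‖ = ‖(B - 1) + 1‖ := by rw [sub_add_cancel]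
      _ ≤ ‖B - 1‖ + 1 := (norm_add_le _ _).trans (by gcongr; exact norm_id_le)
  have : ‖B - 1‖ ≤ ‖T - 1‖ * (‖B - 1‖ + 1) := by
    calc ‖B - 1‖ = ‖-((T - 1) * B)‖ := by rw [sub_mul, hTB, one_mul, neg_sub]
      _ ≤ ‖T - 1‖ * ‖B‖ := by rw [norm_neg]; exact norm_mul_le _ _
      _ ≤ ‖T - 1‖ * (‖B - 1‖ + 1) := by gcongr
  nlinarith [norm_nonneg (B - 1)]

theorem ContinuousLinearMap.exists_equiv_norm_symm_sub_one_le {𝕜 E : Type*}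
    [NontriviallyNormedField 𝕜] [NormedAddCommGroup E] [NormedSpace 𝕜 E] [CompleteSpace E]
    {T : E →L[𝕜] E} (hT : ‖T - 1‖ ≤ 1 / 2) :
    ∃ e : E ≃L[𝕜] E, (e : E →L[𝕜] E) = T ∧ ‖(e.symm : E →L[𝕜] E) - 1‖ ≤ 2 * ‖T - 1‖ := by
  let u : (E →L[𝕜] E)ˣ := Units.oneSub (1 - T) (by rw [norm_sub_rev]; linarith)
  have hu : (u : E →L[𝕜] E) = T := sub_sub_cancel 1 T
  refine ⟨ContinuousLinearEquiv.unitsEquiv 𝕜 E u, by rw [← hu]; rfl, ?_⟩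
  refine norm_sub_one_le_of_mul_eq_one ?_ hT
  rw [← hu, ← u.mul_inv]
  rfl

section NearIdentity

variable {E : Type*} [NormedAddCommGroup E] [NormedSpace ℂ E] {f : E → E} {c : E} {h δ : ℝ}

theorem hasFDerivAt_sub_id (hf : DifferentiableOn ℂ f (ball c h)) {x : E} (hx : x ∈ ball c h) :
    HasFDerivAt (fun y => f y - y) (fderiv ℂ f x - 1) x :=
  (hf.differentiableAt (isOpen_ball.mem_nhds hx)).hasFDerivAt.sub (hasFDerivAt_id x)

theorem norm_fderiv_sub_one_le (hh : 0 < h) (hf : DifferentiableOn ℂ f (ball c h))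
    (hclose : ∀ x ∈ ball c h, ‖f x - x‖ ≤ δ) {x : E} (hx : x ∈ ball c (h / 2)) :
    ‖fderiv ℂ f x - 1‖ ≤ 2 * δ / h := by
  have hsub : closedBall x (h / 2) ⊆ ball c h :=
    closedBall_subset_ball' (by rw [mem_ball] at hx; linarith)
  rw [← (hasFDerivAt_sub_id hf (hsub (mem_closedBall_self (by positivity)))).fderiv]
  refine (Complex.norm_fderiv_le_of_forall_mem_closedBall_norm_le (by positivity)
    ((hf.sub differentiableOn_id).mono hsub) fun y hy => hclose y (hsub hy)).trans_eq ?_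
  ring

theorem lipschitzOnWith_sub_id (hh : 0 < h) (hδ : δ ≤ h / 4)
    (hf : DifferentiableOn ℂ f (ball c h)) (hclose : ∀ x ∈ ball c h, ‖f x - x‖ ≤ δ) :
    LipschitzOnWith (1 / 2) (fun x => f x - x) (ball c (h / 2)) := by
  have hsub : ball c (h / 2) ⊆ ball c h := ball_subset_ball (by linarith)
  refine (convex_ball c (h / 2)).lipschitzOnWith_of_nnnorm_fderiv_le
    (fun x hx => (hasFDerivAt_sub_id hf (hsub hx)).differentiableAt) fun x hx => ?_
  rw [← NNReal.coe_le_coe, coe_nnnorm, (hasFDerivAt_sub_id hf (hsub hx)).fderiv]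
  calc ‖fderiv ℂ f x - 1‖ ≤ 2 * δ / h := norm_fderiv_sub_one_le hh hf hclose hx
    _ ≤ _ := by rw [div_le_iff₀ hh]; push_cast; linarith

theorem exists_rightInverse_of_norm_sub_id_le [CompleteSpace E] (hh : 0 < h) (hδ : δ ≤ h / 4)
    (hf : DifferentiableOn ℂ f (ball c h)) (hclose : ∀ x ∈ ball c h, ‖f x - x‖ ≤ δ) :
    ∃ φ : E → E, ∀ ω ∈ ball c (h / 4), f (φ ω) = ω ∧ ‖φ ω - ω‖ ≤ δ := by
  have hδ0 : 0 ≤ δ := (norm_nonneg _).trans (hclose c (mem_ball_self hh))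
  suffices ∀ ω, ∃ x, ω ∈ ball c (h / 4) → f x = ω ∧ ‖x - ω‖ ≤ δ by
    choose φ hφ using this
    exact ⟨φ, fun ω hω => hφ ω hω⟩
  intro ω
  by_cases hω : ω ∈ ball c (h / 4)
  swap
  · exact ⟨ω, fun hω' => (hω hω').elim⟩
  have hsub : closedBall ω δ ⊆ ball c (h / 2) :=
    closedBall_subset_ball' (by rw [mem_ball] at hω; linarith)
  have hmaps : MapsTo (fun x => ω - (f x - x)) (closedBall ω δ) (closedBall ω δ) := fun x hx => by
    rw [mem_closedBall, dist_eq_norm, sub_sub_cancel_left, norm_neg]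
    exact hclose x (ball_subset_ball (by linarith) (hsub hx))
  obtain ⟨x, hx, hfx⟩ := exists_add_eq_of_lipschitzOnWith (by norm_num) isClosed_closedBall
    (mem_closedBall_self hδ0) ((lipschitzOnWith_sub_id hh hδ hf hclose).mono hsub) hmaps
  rw [add_sub_cancel] at hfx
  exact ⟨x, fun _ => ⟨hfx, mem_closedBall_iff_norm.mp hx⟩⟩

theorem exists_hasFDerivAt_of_rightInverse [CompleteSpace E] (hh : 0 < h) (hδ : δ ≤ h / 4)
    (hf : DifferentiableOn ℂ f (ball c h)) (hclose : ∀ x ∈ ball c h, ‖f x - x‖ ≤ δ) {φ : E → E}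
    (hφ : ∀ ω ∈ ball c (h / 4), f (φ ω) = ω ∧ ‖φ ω - ω‖ ≤ δ) {ω : E} (hω : ω ∈ ball c (h / 4)) :
    ∃ B : E →L[ℂ] E, HasFDerivAt φ B ω ∧ h / 4 * ‖B - 1‖ ≤ δ := by
  have hmaps : MapsTo φ (ball c (h / 4)) (ball c (h / 2)) := fun y hy => by
    rw [mem_ball, dist_eq_norm] at hy ⊢
    calc ‖φ y - c‖ ≤ ‖φ y - y‖ + ‖y - c‖ := norm_sub_le_norm_sub_add_norm_sub _ _ _
      _ < h / 2 := by linarith [(hφ y (mem_ball_iff_norm.mpr hy)).2]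
  have hcont : ContinuousAt φ ω :=
    ((lipschitzOnWith_of_add_eq (by norm_num) (lipschitzOnWith_sub_id hh hδ hf hclose) hmaps
      fun y hy => by rw [add_sub_cancel, (hφ y hy).1]).continuousOn).continuousAt
      (isOpen_ball.mem_nhds hω)
  have hx : φ ω ∈ ball c h := ball_subset_ball (by linarith) (hmaps hω)
  have hT : ‖fderiv ℂ f (φ ω) - 1‖ ≤ 2 * δ / h := norm_fderiv_sub_one_le hh hf hclose (hmaps hω)
  obtain ⟨e, he, heδ⟩ := ContinuousLinearMap.exists_equiv_norm_symm_sub_one_le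
    (hT.trans (by rw [div_le_iff₀ hh]; linarith))
  refine ⟨e.symm, ?_, ?_⟩
  · refine HasFDerivAt.of_local_left_inverse (f := f) hcont ?_ ?_
    · rw [he]
      exact (hf.differentiableAt (isOpen_ball.mem_nhds hx)).hasFDerivAt
    · filter_upwards [isOpen_ball.mem_nhds hω] with y hy using (hφ y hy).1
  · calc h / 4 * ‖(e.symm : E →L[ℂ] E) - 1‖ ≤ h / 4 * (2 * (2 * δ / h)) := by gcongr; linarith
      _ = δ := by field_simp; ring

end NearIdentity

theorem mem_ball_iff_forall_norm_sub_lt {ι G : Type*} [Fintype ι] [SeminormedAddCommGroup G]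
    {x y : ι → G} {r : ℝ} (hr : 0 < r) : y ∈ ball x r ↔ ∀ i, ‖y i - x i‖ < r := by
  simp only [mem_ball_iff_norm, pi_norm_lt_iff hr, Pi.sub_apply]

/-- quantitative inverse function theorem: if `f` is holomorphic on the
polydisc `O_h = {ω : |ω - ω₀|_∞ < h}` with `|f - Id|_h ≤ δ ≤ h/4`, then `f` has a
holomorphic inverse `φ : O_{h/4} → O_h` with `f ∘ φ = Id`, `|φ - Id|_{h/4} ≤ δ` and
`(h/4)·|Dφ - Id|_{h/4} ≤ δ` (operator norm induced by the sup norm). -/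
theorem stmt10 (n : ℕ) (ω₀ : Fin n → ℂ) (h δ : ℝ) (hh : 0 < h)
    (hδ0 : 0 ≤ δ) (hδ : δ ≤ h / 4)
    (f : (Fin n → ℂ) → (Fin n → ℂ))
    (hf : DifferentiableOn ℂ f {ω | ∀ i, ‖ω i - ω₀ i‖ < h})
    (hclose : ∀ ω, (∀ i, ‖ω i - ω₀ i‖ < h) → ∀ i, ‖f ω i - ω i‖ ≤ δ) :
    ∃ φ : (Fin n → ℂ) → (Fin n → ℂ),
      DifferentiableOn ℂ φ {ω | ∀ i, ‖ω i - ω₀ i‖ < h / 4} ∧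
      (∀ ω, (∀ i, ‖ω i - ω₀ i‖ < h / 4) →
        (∀ i, ‖φ ω i - ω₀ i‖ < h) ∧ f (φ ω) = ω ∧ ∀ i, ‖φ ω i - ω i‖ ≤ δ) ∧
      (∀ ω, (∀ i, ‖ω i - ω₀ i‖ < h / 4) →
        (h / 4) * ‖fderiv ℂ φ ω - ContinuousLinearMap.id ℂ (Fin n → ℂ)‖ ≤ δ) := by
  have hh4 : 0 < h / 4 := by positivity
  simp only [← mem_ball_iff_forall_norm_sub_lt hh, ← mem_ball_iff_forall_norm_sub_lt hh4,
    ofPred_mem_eq] at hf hclose ⊢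
  have hclose' : ∀ x ∈ ball ω₀ h, ‖f x - x‖ ≤ δ := fun x hx =>
    (pi_norm_le_iff_of_nonneg hδ0).mpr (hclose x hx)
  obtain ⟨φ, hφ⟩ := exists_rightInverse_of_norm_sub_id_le hh hδ hf hclose'
  have hφ' := fun ω (hω : ω ∈ ball ω₀ (h / 4)) =>
    exists_hasFDerivAt_of_rightInverse hh hδ hf hclose' hφ hω
  refine ⟨φ, fun ω hω => ?_, fun ω hω => ⟨?_, (hφ ω hω).1, fun i => ?_⟩, fun ω hω => ?_⟩
  · obtain ⟨B, hB, -⟩ := hφ' ω hω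
    exact hB.differentiableAt.differentiableWithinAt
  · rw [mem_ball_iff_norm] at hω ⊢
    calc ‖φ ω - ω₀‖ ≤ ‖φ ω - ω‖ + ‖ω - ω₀‖ := norm_sub_le_norm_sub_add_norm_sub _ _ _
      _ < h := by linarith [(hφ ω (mem_ball_iff_norm.mpr hω)).2]
  · exact (norm_le_pi_norm (φ ω - ω) i).trans (hφ ω hω).2
  · obtain ⟨B, hB, hBδ⟩ := hφ' ω hω
    rwa [hB.fderiv, ← ContinuousLinearMap.one_def]
end

section
/- Let ω₀ ∈ R^n be non-resonant and suppose ω₀ satisfies the Bruno–Rüssmann condition ∫_1^∞ Q^{-2} ln Ψ(Q) dQ < ∞, where Ψ(Q) = sup{|k·ω₀|^{-1} : 0 < |k|₁ ≤ Q}. Define Δ(Q) = QΨ(Q) and Δ*(x) = sup{Q ≥ 1 : Δ(Q) ≤ x}. Then ∫_{Δ(1)}^∞ dx/(x Δ*(x)) < ∞. Conversely, if ∫_{Δ(1)}^∞ dx/(x Δ*(x)) < ∞ then ∫_1^∞ Q^{-2} ln Ψ(Q) dQ < ∞. -/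
/-!
Apply Tonelli to the density `Q⁻² x⁻¹` on the region `1 < Q`, `Δ(1) < x ≤ Δ(Q)`. Integrating
in `x` first gives `Q⁻² (log Δ(Q) - log Δ(1))`; integrating in `Q` first gives `1 / (x Δ*(x))`,
because for strictly increasing `Δ` the section `{Q > 1 | x ≤ Δ(Q)}` is `(Δ*(x), ∞)` up to one
point. Since `log Δ(Q) = log Q + log Ψ(Q)` and `Q⁻² log Q` is integrable on `(1, ∞)`, the two
integrability conditions agree.
-/

open MeasureTheory Set Real

lemma lintegral_Ioc_ofReal_inv {a b : ℝ} (ha : 0 < a) (hab : a ≤ b) :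
    ∫⁻ x in Ioc a b, ENNReal.ofReal x⁻¹ = ENNReal.ofReal (log b - log a) := by
  have hint : IntegrableOn (fun x : ℝ => x⁻¹) (Ioc a b) :=
    ((continuousOn_inv₀.mono fun x hx => (ha.trans_le hx.1).ne').integrableOn_Icc).mono_set
      Ioc_subset_Icc_self
  rw [← ofReal_integral_eq_lintegral_ofReal hint
    (ae_restrict_of_forall_mem measurableSet_Ioc fun x hx => (inv_pos.2 (ha.trans hx.1)).le),
    ← intervalIntegral.integral_of_le hab, integral_inv_of_pos ha (ha.trans_le hab),
    log_div (ha.trans_le hab).ne' ha.ne']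

lemma inv_sq_eq_rpow_neg_two {x : ℝ} (hx : 0 < x) : x⁻¹ ^ 2 = x ^ (-2 : ℝ) := by
  rw [rpow_neg hx.le, inv_pow, rpow_two]

lemma integrableOn_Ioi_inv_sq {c : ℝ} (hc : 0 < c) :
    IntegrableOn (fun Q : ℝ => Q⁻¹ ^ 2) (Ioi c) :=
  (integrableOn_Ioi_rpow_of_lt (by norm_num) hc).congr_fun
    (fun _ hx => (inv_sq_eq_rpow_neg_two (hc.trans hx)).symm) measurableSet_Ioi

lemma lintegral_Ioi_ofReal_inv_sq {c : ℝ} (hc : 0 < c) :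
    ∫⁻ Q in Ioi c, ENNReal.ofReal (Q⁻¹ ^ 2) = ENNReal.ofReal c⁻¹ := by
  rw [← ofReal_integral_eq_lintegral_ofReal (integrableOn_Ioi_inv_sq hc)
    (ae_restrict_of_forall_mem measurableSet_Ioi fun _ _ => by positivity),
    setIntegral_congr_fun measurableSet_Ioi fun _ hx => inv_sq_eq_rpow_neg_two (hc.trans hx),
    integral_Ioi_rpow_of_lt (by norm_num) hc]
  norm_num [rpow_neg_one]

lemma integrableOn_Ioi_inv_sq_mul_log :
    IntegrableOn (fun Q : ℝ => Q⁻¹ ^ 2 * log Q) (Ioi 1) := by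
  refine ((integrableOn_Ioi_rpow_of_lt (a := -(3 / 2)) (by norm_num) one_pos).const_mul 2).mono'
    ((measurable_inv.pow_const 2).mul measurable_log).aestronglyMeasurable
    (ae_restrict_of_forall_mem measurableSet_Ioi fun Q (hQ : 1 < Q) => ?_)
  have hQ0 : 0 < Q := one_pos.trans hQ
  have hlog : log Q ≤ 2 * Q ^ (1 / 2 : ℝ) := by
    have := log_le_rpow_div hQ0.le (by norm_num : (0 : ℝ) < 1 / 2)
    linarith
  rw [Real.norm_of_nonneg (by positivity [log_nonneg hQ.le]), inv_sq_eq_rpow_neg_two hQ0]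
  calc Q ^ (-2 : ℝ) * log Q ≤ Q ^ (-2 : ℝ) * (2 * Q ^ (1 / 2 : ℝ)) := by gcongr
    _ = 2 * Q ^ (-(3 / 2) : ℝ) := by
      rw [mul_left_comm, ← rpow_add hQ0]; norm_num

lemma ae_eq_Ioi_of_Ioi_subset_of_subset_Ici {α : Type*} [MeasurableSpace α] [PartialOrder α]
    {μ : Measure α} [NullSingletonClass μ] {s : Set α} {a : α} (h₁ : Ioi a ⊆ s)
    (h₂ : s ⊆ Ici a) : s =ᵐ[μ] Ioi a :=
  (h₂.eventuallyLE.trans Ioi_ae_eq_Ici.symm.le).antisymm h₁.eventuallyLE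

noncomputable def dualityDensity (Δ : ℝ → ℝ) (Q x : ℝ) : ENNReal :=
  {p : ℝ × ℝ | 1 < p.1 ∧ Δ 1 < p.2 ∧ p.2 ≤ Δ p.1}.indicator
    (fun p => ENNReal.ofReal (p.1⁻¹ ^ 2) * ENNReal.ofReal p.2⁻¹) (Q, x)

section Tonelli

variable {Δ : ℝ → ℝ}

lemma ae_eq_Ioi_sSup_of_strictMonoOn {μ : Measure ℝ} [NullSingletonClass μ]
    (hΔ : StrictMonoOn Δ (Ici 1)) {x : ℝ} (hx : Δ 1 ≤ x) (hbdd : BddAbove {Q | 1 ≤ Q ∧ Δ Q ≤ x}) :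
    {Q | 1 < Q ∧ x ≤ Δ Q} =ᵐ[μ] Ioi (sSup {Q | 1 ≤ Q ∧ Δ Q ≤ x}) := by
  have hone : 1 ∈ {Q | 1 ≤ Q ∧ Δ Q ≤ x} := ⟨le_rfl, hx⟩
  refine ae_eq_Ioi_of_Ioi_subset_of_subset_Ici (fun Q hQ => ?_)
    (fun Q ⟨hQ, hxQ⟩ => mem_Ici.2 <| le_of_not_gt fun hlt => ?_)
  · have hQ1 : 1 < Q := (le_csSup hbdd hone).trans_lt hQ
    refine ⟨hQ1, le_of_not_gt fun hQx => ?_⟩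
    exact (le_csSup hbdd ⟨hQ1.le, hQx.le⟩).not_gt hQ
  · obtain ⟨Q', ⟨hQ'1, hQ'x⟩, hQQ'⟩ := exists_lt_of_lt_csSup ⟨1, hone⟩ hlt
    exact (hΔ (mem_Ici.2 hQ.le) hQ'1 hQQ').not_ge (hQ'x.trans hxQ)

lemma measurable_uncurry_dualityDensity (hmeas : Measurable Δ) :
    Measurable (Function.uncurry (dualityDensity Δ)) :=
  (((measurable_fst.inv.pow_const 2).ennreal_ofReal).mul
    measurable_snd.inv.ennreal_ofReal).indicator
      ((measurableSet_lt measurable_const measurable_fst).inter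
        ((measurableSet_lt measurable_const measurable_snd).inter
          (measurableSet_le measurable_snd (hmeas.comp measurable_fst))))

lemma lintegral_dualityDensity_fst (hΔ : MonotoneOn Δ (Ici 1)) (hpos : 0 < Δ 1) (Q : ℝ) :
    ∫⁻ x, dualityDensity Δ Q x =
      (Ioi 1).indicator (fun Q => ENNReal.ofReal (Q⁻¹ ^ 2 * (log (Δ Q) - log (Δ 1)))) Q := by
  by_cases hQ : 1 < Q
  · have : dualityDensity Δ Q = (Ioc (Δ 1) (Δ Q)).indicator
        fun x => ENNReal.ofReal (Q⁻¹ ^ 2) * ENNReal.ofReal x⁻¹ := by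
      ext x
      simp only [dualityDensity, indicator_apply, mem_ofPred_eq, mem_Ioc, hQ, true_and]
    rw [this, lintegral_indicator measurableSet_Ioc,
      lintegral_const_mul' _ _ ENNReal.ofReal_ne_top,
      lintegral_Ioc_ofReal_inv hpos (hΔ (mem_Ici.2 le_rfl) (mem_Ici.2 hQ.le) hQ.le),
      ← ENNReal.ofReal_mul (by positivity), indicator_of_mem (mem_Ioi.2 hQ)]
  · simp [dualityDensity, hQ]

lemma lintegral_dualityDensity_snd (hmeas : Measurable Δ) (hΔ : StrictMonoOn Δ (Ici 1))
    (hbdd : ∀ x, BddAbove {Q | 1 ≤ Q ∧ Δ Q ≤ x}) (x : ℝ) :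
    ∫⁻ Q, dualityDensity Δ Q x =
      (Ioi (Δ 1)).indicator (fun x => ENNReal.ofReal (x * sSup {Q | 1 ≤ Q ∧ Δ Q ≤ x})⁻¹) x := by
  by_cases hx : Δ 1 < x
  · have : (fun Q => dualityDensity Δ Q x) = {Q | 1 < Q ∧ x ≤ Δ Q}.indicator
        fun Q => ENNReal.ofReal (Q⁻¹ ^ 2) * ENNReal.ofReal x⁻¹ := by
      ext Q
      simp only [dualityDensity, indicator_apply, mem_ofPred_eq, hx, true_and]
    have hsSup : 1 ≤ sSup {Q | 1 ≤ Q ∧ Δ Q ≤ x} := le_csSup (hbdd x) ⟨le_rfl, hx.le⟩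
    have hT : MeasurableSet {Q | 1 < Q ∧ x ≤ Δ Q} :=
      measurableSet_Ioi.inter (measurableSet_le measurable_const hmeas)
    rw [this, lintegral_indicator hT,
      Measure.restrict_congr_set (ae_eq_Ioi_sSup_of_strictMonoOn hΔ hx.le (hbdd x)),
      lintegral_mul_const' _ _ ENNReal.ofReal_ne_top,
      lintegral_Ioi_ofReal_inv_sq (one_pos.trans_le hsSup), ← ENNReal.ofReal_mul (by positivity),
      indicator_of_mem (mem_Ioi.2 hx), mul_comm, mul_inv]
  · simp [dualityDensity, hx]

theorem lintegral_inv_sq_mul_log_sub_eq_lintegral_inv_mul_sSup (hmeas : Measurable Δ)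
    (hΔ : StrictMonoOn Δ (Ici 1)) (hpos : 0 < Δ 1) (hbdd : ∀ x, BddAbove {Q | 1 ≤ Q ∧ Δ Q ≤ x}) :
    ∫⁻ Q in Ioi 1, ENNReal.ofReal (Q⁻¹ ^ 2 * (log (Δ Q) - log (Δ 1))) =
      ∫⁻ x in Ioi (Δ 1), ENNReal.ofReal (x * sSup {Q | 1 ≤ Q ∧ Δ Q ≤ x})⁻¹ := by
  rw [← lintegral_indicator measurableSet_Ioi, ← lintegral_indicator measurableSet_Ioi]
  simp_rw [← lintegral_dualityDensity_fst hΔ.monotoneOn hpos,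
    ← lintegral_dualityDensity_snd hmeas hΔ hbdd]
  exact lintegral_lintegral_swap (measurable_uncurry_dualityDensity hmeas).aemeasurable

end Tonelli

section Dual

variable {Ψ Δ : ℝ → ℝ}

lemma strictMonoOn_of_eq_mul (hΨ : Monotone Ψ) (hpos : 0 < Ψ 1) (hΔ : ∀ Q, Δ Q = Q * Ψ Q) :
    StrictMonoOn Δ (Ici 1) := fun a (ha : 1 ≤ a) b (hb : 1 ≤ b) hab => by
  rw [hΔ, hΔ]
  calc a * Ψ a ≤ a * Ψ b := mul_le_mul_of_nonneg_left (hΨ hab.le) (zero_le_one.trans ha)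
    _ < b * Ψ b := mul_lt_mul_of_pos_right hab (hpos.trans_le (hΨ hb))

lemma bddAbove_of_eq_mul (hΨ : Monotone Ψ) (hpos : 0 < Ψ 1) (hΔ : ∀ Q, Δ Q = Q * Ψ Q) (x : ℝ) :
    BddAbove {Q | 1 ≤ Q ∧ Δ Q ≤ x} := ⟨x / Ψ 1, fun Q ⟨hQ, hQx⟩ => by
  rw [le_div_iff₀ hpos]
  calc Q * Ψ 1 ≤ Q * Ψ Q := mul_le_mul_of_nonneg_left (hΨ hQ) (zero_le_one.trans hQ)
    _ ≤ x := hΔ Q ▸ hQx⟩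

lemma integrableOn_inv_sq_mul_log_iff_of_eq_mul (hΨ : Monotone Ψ) (hpos : 0 < Ψ 1)
    (hΔ : ∀ Q, Δ Q = Q * Ψ Q) :
    IntegrableOn (fun Q => Q⁻¹ ^ 2 * log (Ψ Q)) (Ioi 1) ↔
      IntegrableOn (fun Q => Q⁻¹ ^ 2 * (log (Δ Q) - log (Δ 1))) (Ioi 1) := by
  have hsplit : EqOn (fun Q => Q⁻¹ ^ 2 * log (Ψ Q))
      (fun Q => Q⁻¹ ^ 2 * (log (Δ Q) - log (Δ 1)) + (log (Ψ 1) * Q⁻¹ ^ 2 - Q⁻¹ ^ 2 * log Q))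
      (Ioi 1) := fun Q (hQ : 1 < Q) => by
    simp only [hΔ, one_mul, log_mul (zero_lt_one.trans hQ).ne' (hpos.trans_le (hΨ hQ.le)).ne']
    ring
  have hrest : IntegrableOn (fun Q => log (Ψ 1) * Q⁻¹ ^ 2 - Q⁻¹ ^ 2 * log Q) (Ioi 1) :=
    ((integrableOn_Ioi_inv_sq one_pos).const_mul _).sub integrableOn_Ioi_inv_sq_mul_log
  rw [integrableOn_congr_fun hsplit measurableSet_Ioi, IntegrableOn,
    integrable_add_iff_integrable_left' hrest, IntegrableOn]

theorem integrableOn_inv_sq_mul_log_iff {Δs : ℝ → ℝ} (hΨ : Monotone Ψ) (hpos : 0 < Ψ 1)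
    (hΔ : ∀ Q, Δ Q = Q * Ψ Q) (hΔs : ∀ x, Δs x = sSup {Q | 1 ≤ Q ∧ Δ Q ≤ x}) :
    IntegrableOn (fun Q => Q⁻¹ ^ 2 * log (Ψ Q)) (Ioi 1) ↔
      IntegrableOn (fun x => (x * Δs x)⁻¹) (Ioi (Δ 1)) := by
  have hΔpos : 0 < Δ 1 := by rwa [hΔ, one_mul]
  have hΔmono := strictMonoOn_of_eq_mul hΨ hpos hΔ
  have hbdd := bddAbove_of_eq_mul hΨ hpos hΔ
  have hΔmeas : Measurable Δ := funext hΔ ▸ measurable_id.mul hΨ.measurable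
  have hmain_nonneg : ∀ Q ∈ Ioi (1 : ℝ), 0 ≤ Q⁻¹ ^ 2 * (log (Δ Q) - log (Δ 1)) := fun Q hQ =>
    mul_nonneg (by positivity) (sub_nonneg.2 (log_le_log hΔpos
      (hΔmono.monotoneOn (mem_Ici.2 le_rfl) (mem_Ici.2 (le_of_lt hQ)) (le_of_lt hQ))))
  have hmain_meas : Measurable fun Q : ℝ => Q⁻¹ ^ 2 * (log (Δ Q) - log (Δ 1)) := by fun_prop
  have hdual_nonneg : ∀ x ∈ Ioi (Δ 1), 0 ≤ (x * sSup {Q | 1 ≤ Q ∧ Δ Q ≤ x})⁻¹ := fun x hx =>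
    inv_nonneg.2 (mul_nonneg (hΔpos.trans hx).le
      (Real.sSup_nonneg fun Q hQ => zero_le_one.trans hQ.1))
  have hsSup_mono : MonotoneOn (fun x => sSup {Q | 1 ≤ Q ∧ Δ Q ≤ x}) (Ioi (Δ 1)) :=
    fun a (ha : Δ 1 < a) b _ hab =>
      csSup_le_csSup (hbdd b) ⟨1, le_rfl, ha.le⟩ fun Q ⟨hQ, hQa⟩ => ⟨hQ, hQa.trans hab⟩
  have hdual_meas : AEMeasurable (fun x => (x * sSup {Q | 1 ≤ Q ∧ Δ Q ≤ x})⁻¹)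
      (volume.restrict (Ioi (Δ 1))) :=
    (aemeasurable_id.mul (aemeasurable_restrict_of_monotoneOn measurableSet_Ioi hsSup_mono)).inv
  simp_rw [hΔs]
  rw [integrableOn_inv_sq_mul_log_iff_of_eq_mul hΨ hpos hΔ, IntegrableOn, IntegrableOn,
    ← lintegral_ofReal_ne_top_iff_integrable hmain_meas.aestronglyMeasurable
      (ae_restrict_of_forall_mem measurableSet_Ioi hmain_nonneg),
    ← lintegral_ofReal_ne_top_iff_integrable hdual_meas.aestronglyMeasurable
      (ae_restrict_of_forall_mem measurableSet_Ioi hdual_nonneg),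
    lintegral_inv_sq_mul_log_sub_eq_lintegral_inv_mul_sSup hΔmeas hΔmono hΔpos hbdd]

end Dual

section SmallDivisors

variable {n : ℕ} (ω : Fin n → ℝ)

def invSmallDivisors (Q : ℝ) : Set ℝ :=
  {x | ∃ k : Fin n → ℤ, k ≠ 0 ∧ ((∑ i, |k i| : ℤ) : ℝ) ≤ Q ∧ x = |∑ i, (k i : ℝ) * ω i|⁻¹}

lemma invSmallDivisors_mono : Monotone (invSmallDivisors ω) :=
  fun _ _ hab _ ⟨k, hk, hkQ, hx⟩ => ⟨k, hk, hkQ.trans hab, hx⟩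

lemma invSmallDivisors_finite (Q : ℝ) : (invSmallDivisors ω Q).Finite := by
  refine ((Set.Finite.pi fun _ => Set.finite_Icc (-⌈Q⌉) ⌈Q⌉).image
    fun k : Fin n → ℤ => |∑ i, (k i : ℝ) * ω i|⁻¹).subset ?_
  rintro _ ⟨k, -, hkQ, rfl⟩
  refine ⟨k, mem_univ_pi.2 fun i => abs_le.1 ?_, rfl⟩
  have : ((|k i| : ℤ) : ℝ) ≤ ⌈Q⌉ :=
    calc ((|k i| : ℤ) : ℝ) ≤ ((∑ j, |k j| : ℤ) : ℝ) := by
          exact_mod_cast Finset.single_le_sum (fun j _ => abs_nonneg (k j)) (Finset.mem_univ i)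
      _ ≤ Q := hkQ
      _ ≤ ⌈Q⌉ := Int.le_ceil Q
  exact_mod_cast this

lemma inv_abs_mem_invSmallDivisors (i : Fin n) {Q : ℝ} (hQ : 1 ≤ Q) :
    |ω i|⁻¹ ∈ invSmallDivisors ω Q :=
  ⟨Pi.single i 1, by simp, by simpa [Pi.single_apply, apply_ite] using hQ,
    by simp [Pi.single_apply]⟩

lemma monotone_sSup_invSmallDivisors : Monotone fun Q => sSup (invSmallDivisors ω Q) := by
  intro a b hab
  dsimp only
  rcases (invSmallDivisors ω a).eq_empty_or_nonempty with ha | ha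
  · rw [ha, Real.sSup_empty]
    exact Real.sSup_nonneg fun _ ⟨_, _, _, hx⟩ => hx ▸ inv_nonneg.2 (abs_nonneg _)
  · exact csSup_le_csSup (invSmallDivisors_finite ω b).bddAbove ha (invSmallDivisors_mono ω hab)

lemma sSup_invSmallDivisors_one_pos (hres : ∀ k : Fin n → ℤ, ∑ i, (k i : ℝ) * ω i = 0 → k = 0)
    (i : Fin n) : 0 < sSup (invSmallDivisors ω 1) := by
  have hωi : ω i ≠ 0 := fun h => by
    simpa using hres (Pi.single i 1) (by simp [Pi.single_apply, h])
  exact (inv_pos.2 (abs_pos.2 hωi)).trans_le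
    (le_csSup (invSmallDivisors_finite ω 1).bddAbove (inv_abs_mem_invSmallDivisors ω i le_rfl))

end SmallDivisors

/-- equivalence of the Bruno–Rüssmann condition
`∫_1^∞ Q⁻² ln Ψ(Q) dQ < ∞` with the condition `∫_{Δ(1)}^∞ dx/(x Δ*(x)) < ∞`,
where `Ψ(Q) = sup{|k·ω₀|⁻¹ : 0 < |k|₁ ≤ Q}` for a non-resonant `ω₀`,
`Δ(Q) = QΨ(Q)` and `Δ*(x) = sup{Q ≥ 1 : Δ(Q) ≤ x}`. -/
theorem stmt11 (n : ℕ) (hn : 1 ≤ n) (ω : Fin n → ℝ)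
    (hres : ∀ k : Fin n → ℤ, (∑ i, (k i : ℝ) * ω i) = 0 → k = 0)
    (Ψ Δ Δs : ℝ → ℝ)
    (hΨ : ∀ Q, Ψ Q = sSup {x : ℝ | ∃ k : Fin n → ℤ, k ≠ 0 ∧
      ((∑ i, |k i| : ℤ) : ℝ) ≤ Q ∧ x = |∑ i, (k i : ℝ) * ω i|⁻¹})
    (hΔ : ∀ Q, Δ Q = Q * Ψ Q)
    (hΔs : ∀ x, Δs x = sSup {Q : ℝ | 1 ≤ Q ∧ Δ Q ≤ x}) :
    MeasureTheory.IntegrableOn (fun Q => Q⁻¹ ^ 2 * Real.log (Ψ Q)) (Set.Ioi (1:ℝ)) ↔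
    MeasureTheory.IntegrableOn (fun x => (x * Δs x)⁻¹) (Set.Ioi (Δ 1)) := by
  obtain rfl : Ψ = fun Q => sSup (invSmallDivisors ω Q) := funext hΨ
  exact integrableOn_inv_sq_mul_log_iff (monotone_sSup_invSmallDivisors ω)
    (sSup_invSmallDivisors_one_pos ω hres ⟨0, hn⟩) hΔ hΔs
end

section
/- Let v ∈ Q^n be a rational vector of denominator q (qv ∈ Z^n). For functions F, P : T^n × R^n → R (θ ∈ T^n, I ∈ R^n) that are C¹, set N_v(I) = e + v·I for a constant e, [P]_v(I,θ) = ∫_0^1 P(I, θ + t q v) dt, and F(I,θ) = q ∫_0^1 (P − [P]_v)(I, θ + t q v) t dt. Then the Poisson bracket equation {F, N_v} = P − [P]_v holds, where {F, N_v} = ∂_θ F · ∂_I N_v − ∂_I F · ∂_θ N_v = ∂_θ F · v. -/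
/-!
Restricted to an orbit line, `g u = P (x + u • q v)` is continuous and `1`-periodic, and `[P]_v`
is constant along the orbit. After the substitution `u = t + s`, `F / q` along the orbit becomes
`s ↦ ∫ u in s..s+1, g u * (u - s) - [P]_v / 2`, which the fundamental theorem of calculus
differentiates to `(s + 1) g (s + 1) - s g s - ∫₀¹ g = g s - [P]_v`.
Since `∂_I N_v = v` and `∂_θ N_v = 0`, the bracket `{F, N_v}` is the derivative of `F` along `v`,
which is this derivative of `F / q` along `q v`. Differentiability of `F` itself comes from
differentiating under the integral sign, which is where `P ∈ C¹` enters.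
-/

open MeasureTheory

theorem ContinuousLinearMap.sum_apply_single_mul {ι R : Type*} [Fintype ι] [DecidableEq ι]
    [CommSemiring R] [TopologicalSpace R] (L : (ι → R) →L[R] R) (v : ι → R) :
    ∑ i, L (Pi.single i 1) * v i = L v := by
  conv_rhs => rw [← Finset.univ_sum_single v]
  refine (map_sum L _ _).symm ▸ Finset.sum_congr rfl fun i _ => ?_
  rw [← mul_one (v i), ← smul_eq_mul (v i), Pi.single_smul', map_smul, smul_eq_mul, mul_one,
    smul_eq_mul, mul_comm]

theorem hasFDerivAt_intervalIntegral_of_contDiff {E F : Type*} [NormedAddCommGroup E]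
    [NormedSpace ℝ E] [ProperSpace E] [NormedAddCommGroup F] [NormedSpace ℝ F]
    {G : E × ℝ → F} (hG : ContDiff ℝ 1 G) (a b : ℝ) (x : E) :
    HasFDerivAt (fun y => ∫ t in a..b, G (y, t))
      (∫ t in a..b, (fderiv ℝ G (x, t)).comp (.inl ℝ E ℝ)) x := by
  set G' : E × ℝ → E →L[ℝ] F := fun z => (fderiv ℝ G z).comp (.inl ℝ E ℝ)
  have hG'c : Continuous G' := (hG.continuous_fderiv one_ne_zero).clm_comp continuous_const
  have hsec : ∀ y : E, Continuous fun t : ℝ => (y, t) := fun _ =>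
    continuous_const.prodMk continuous_id
  obtain ⟨M, hM⟩ := ((isCompact_closedBall x 1).prod
    (isCompact_uIcc (a := a) (b := b))).exists_bound_of_continuousOn hG'c.continuousOn
  refine intervalIntegral.hasFDerivAt_integral_of_dominated_of_fderiv_le (bound := fun _ => M)
    (F' := fun y t => G' (y, t)) (Metric.ball_mem_nhds x one_pos)
    (.of_forall fun y => (hG.continuous.comp (hsec y)).aestronglyMeasurable)
    ((hG.continuous.comp (hsec x)).intervalIntegrable a b)
    (hG'c.comp (hsec x)).aestronglyMeasurable ?_ intervalIntegrable_const ?_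
  · refine ae_of_all _ fun t ht y hy => hM (y, t) ⟨Metric.ball_subset_closedBall hy, ?_⟩
    exact Set.uIoc_subset_uIcc ht
  · refine ae_of_all _ fun t _ y _ => ?_
    exact ((hG.differentiable one_ne_zero) (y, t)).hasFDerivAt.comp y (hasFDerivAt_prodMk_left y t)

theorem Function.Periodic.hasDerivAt_intervalIntegral_comp_add_mul {g : ℝ → ℝ}
    (hg : Continuous g) (hper : Function.Periodic g 1) (s : ℝ) :
    HasDerivAt (fun s => ∫ t in (0:ℝ)..1, g (t + s) * t) (g s - ∫ t in (0:ℝ)..1, g t) s := by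
  set Φ : ℝ → ℝ := fun u => ∫ r in (0:ℝ)..u, r * g r
  have hΦ : ∀ u, HasDerivAt Φ (u * g u) u := fun u =>
    ((continuous_id.mul hg).integral_hasStrictDerivAt 0 u).hasDerivAt
  have hshift : (fun s => ∫ t in (0:ℝ)..1, g (t + s) * t) =
      fun s => Φ (s + 1) - Φ s - s * ∫ t in (0:ℝ)..1, g t := by
    funext s
    have hsub : ∀ t, g (t + s) * t = (t + s) * g (t + s) - s * g (t + s) := fun t => by ring
    simp_rw [hsub]
    rw [intervalIntegral.integral_sub, intervalIntegral.integral_const_mul,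
      intervalIntegral.integral_comp_add_right (fun u => u * g u),
      intervalIntegral.integral_comp_add_right g, zero_add, add_comm 1 s,
      hper.intervalIntegral_add_eq s 0, zero_add,
      intervalIntegral.integral_interval_sub_left]
    all_goals exact Continuous.intervalIntegrable (by fun_prop) _ _
  rw [hshift]
  refine ((((hΦ (s + 1)).comp_add_const s 1).sub (hΦ s)).sub
    ((hasDerivAt_id' s).mul_const (∫ t in (0:ℝ)..1, g t))).congr_deriv ?_
  rw [hper s]; ring

section OrbitAverage

variable {E : Type*} [NormedAddCommGroup E] [NormedSpace ℝ E]

noncomputable def orbitAverage (f : E → ℝ) (w x : E) : ℝ := ∫ t in (0:ℝ)..1, f (x + t • w)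

noncomputable def homologicalSolution (f : E → ℝ) (w x : E) : ℝ :=
  ∫ t in (0:ℝ)..1, (f (x + t • w) - orbitAverage f w (x + t • w)) * t

variable {f : E → ℝ} {w : E}

theorem periodic_comp_add_smul (hper : ∀ x, f (x + w) = f x) (x : E) :
    Function.Periodic (fun u : ℝ => f (x + u • w)) 1 := fun u => by
  simp only [add_smul, one_smul, ← add_assoc, hper]

theorem orbitAverage_add_smul (hper : ∀ x, f (x + w) = f x) (x : E) (s : ℝ) :
    orbitAverage f w (x + s • w) = orbitAverage f w x := by
  have h := (periodic_comp_add_smul hper x).intervalIntegral_add_eq s 0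
  simp only [orbitAverage, add_assoc, ← add_smul, add_comm s]
  rw [intervalIntegral.integral_comp_add_right (fun u => f (x + u • w))]
  simpa [add_comm] using h

theorem homologicalSolution_eq (hf : Continuous f) (hper : ∀ x, f (x + w) = f x) (x : E) :
    homologicalSolution f w x = (∫ t in (0:ℝ)..1, f (x + t • w) * t) - orbitAverage f w x / 2 := by
  simp only [homologicalSolution, orbitAverage_add_smul hper, sub_mul]
  rw [intervalIntegral.integral_sub, intervalIntegral.integral_const_mul, integral_id]
  · ring
  all_goals exact Continuous.intervalIntegrable (by fun_prop) _ _

theorem differentiable_homologicalSolution [ProperSpace E] (hf : ContDiff ℝ 1 f)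
    (hper : ∀ x, f (x + w) = f x) : Differentiable ℝ (homologicalSolution f w) := by
  have hweighted : ∀ c : ℝ → ℝ, ContDiff ℝ 1 c →
      Differentiable ℝ fun x => ∫ t in (0:ℝ)..1, f (x + t • w) * c t := fun c hc x =>
    (hasFDerivAt_intervalIntegral_of_contDiff (G := fun z : E × ℝ => f (z.1 + z.2 • w) * c z.2)
      (by fun_prop) 0 1 x).differentiableAt
  rw [funext (homologicalSolution_eq hf.continuous hper)]
  have hmoment : Differentiable ℝ fun x => ∫ t in (0:ℝ)..1, f (x + t • w) * t :=
    hweighted id contDiff_id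
  have havg : Differentiable ℝ (orbitAverage f w) := by
    have h := hweighted (fun _ => 1) contDiff_const
    simp only [mul_one] at h
    exact h
  fun_prop

theorem fderiv_homologicalSolution_apply_self [ProperSpace E] (hf : ContDiff ℝ 1 f)
    (hper : ∀ x, f (x + w) = f x) (x : E) :
    fderiv ℝ (homologicalSolution f w) x w = f x - orbitAverage f w x := by
  have hline : HasDerivAt (fun s : ℝ => x + s • w) w 0 := by
    simpa using ((hasDerivAt_id (0:ℝ)).smul_const w).const_add x
  have hchain := (differentiable_homologicalSolution hf hper
    (x + (0:ℝ) • w)).hasFDerivAt.comp_hasDerivAt (0:ℝ) hline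
  have hcomp : (fun s : ℝ => homologicalSolution f w (x + s • w)) =
      fun s => (∫ t in (0:ℝ)..1, f (x + (t + s) • w) * t) - orbitAverage f w x / 2 := by
    funext s
    simp only [homologicalSolution_eq hf.continuous hper, orbitAverage_add_smul hper, add_smul,
      add_assoc, add_comm (s • w)]
  have hdirect := ((periodic_comp_add_smul hper x).hasDerivAt_intervalIntegral_comp_add_mul
    (by fun_prop) 0).sub_const (orbitAverage f w x / 2)
  rw [← hcomp] at hdirect
  simpa [orbitAverage] using hchain.unique hdirect

end OrbitAverage

theorem stmt12_general (n : ℕ) (v : Fin n → ℝ) (q : ℕ)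
    (hv : ∀ i, ∃ m : ℤ, (q : ℝ) * v i = (m : ℝ))
    (e : ℝ) (N : (Fin n → ℝ) → ℝ) (hN : ∀ I, N I = e + ∑ i, v i * I i)
    (P : (Fin n → ℝ) → (Fin n → ℝ) → ℝ)
    (hP : ContDiff ℝ 1 (fun z : (Fin n → ℝ) × (Fin n → ℝ) => P z.1 z.2))
    (hper : ∀ (I θ : Fin n → ℝ) (k : Fin n → ℤ), P I (θ + fun i => (k i : ℝ)) = P I θ)
    (Pavg F : (Fin n → ℝ) → (Fin n → ℝ) → ℝ)
    (hPavg : ∀ I θ, Pavg I θ = ∫ t in (0:ℝ)..1, P I (θ + (t * q) • v))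
    (hF : ∀ I θ, F I θ = (q : ℝ) *
      ∫ t in (0:ℝ)..1, (P I (θ + (t * q) • v) - Pavg I (θ + (t * q) • v)) * t)
    (unit : Fin n → Fin n → ℝ) (hunit : ∀ i, unit i = Pi.single i 1) :
    ∀ I θ : Fin n → ℝ,
      (∑ i, (fderiv ℝ (fun θ' => F I θ') θ (unit i) *
               fderiv ℝ (fun I' => N I') I (unit i)
           - fderiv ℝ (fun I' => F I' θ) I (unit i) *
               fderiv ℝ (fun _ : Fin n → ℝ => N I) θ (unit i))) =
        P I θ - Pavg I θ := by
  intro I θ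
  set w : Fin n → ℝ := (q : ℝ) • v
  have hf : ContDiff ℝ 1 (P I) := hP.comp (contDiff_const.prodMk contDiff_id)
  have hperiod : ∀ x, P I (x + w) = P I x := by
    choose m hm using hv
    intro x
    convert hper I x m using 3
    exact funext hm
  have hF_eq : (fun θ' => F I θ') = fun θ' => (q : ℝ) * homologicalSolution (P I) w θ' := by
    funext θ'
    simp only [hF, hPavg, mul_smul]
    rfl
  have hN_deriv : HasFDerivAt (fun I' => N I')
      (∑ j, v j • ContinuousLinearMap.proj (R := ℝ) (φ := fun _ : Fin n => ℝ) j) I := by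
    simp only [hN]
    exact (HasFDerivAt.fun_sum fun j _ => (hasFDerivAt_apply j I).const_mul (v j)).const_add e
  have hDN : ∀ i, fderiv ℝ (fun I' => N I') I (Pi.single i 1) = v i := fun i => by
    simp [hN_deriv.fderiv, Pi.single_apply]
  simp only [hunit, hDN, fderiv_const_apply, zero_apply, mul_zero, sub_zero]
  rw [ContinuousLinearMap.sum_apply_single_mul, hF_eq,
    fderiv_const_mul (differentiable_homologicalSolution hf hperiod θ),
    smul_apply, ← map_smul, fderiv_homologicalSolution_apply_self hf hperiod,
    hPavg]
  simp only [mul_smul]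
  rfl

/-- with `N_v(I) = e + v·I`, `[P]_v` the average of `P` along the
`q`-periodic orbit of the rational vector `v`, and
`F(I,θ) = q ∫_0^1 (P - [P]_v)(I, θ + t q v) t dt`, the Poisson bracket equation
`{F, N_v} = ∂_θ F · ∂_I N_v - ∂_I F · ∂_θ N_v = P - [P]_v` holds
(`unit i = Pi.single i 1` are the coordinate directions). -/
theorem stmt12 (n : ℕ) (v : Fin n → ℝ) (q : ℕ) (hq : 1 ≤ q)
    (hv : ∀ i, ∃ m : ℤ, (q : ℝ) * v i = (m : ℝ))
    (e : ℝ) (N : (Fin n → ℝ) → ℝ) (hN : ∀ I, N I = e + ∑ i, v i * I i)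
    (P : (Fin n → ℝ) → (Fin n → ℝ) → ℝ)
    (hP : ContDiff ℝ 1 (fun z : (Fin n → ℝ) × (Fin n → ℝ) => P z.1 z.2))
    (hper : ∀ (I θ : Fin n → ℝ) (k : Fin n → ℤ), P I (θ + fun i => (k i : ℝ)) = P I θ)
    (Pavg F : (Fin n → ℝ) → (Fin n → ℝ) → ℝ)
    (hPavg : ∀ I θ, Pavg I θ = ∫ t in (0:ℝ)..1, P I (θ + (t * q) • v))
    (hF : ∀ I θ, F I θ = (q : ℝ) *
      ∫ t in (0:ℝ)..1, (P I (θ + (t * q) • v) - Pavg I (θ + (t * q) • v)) * t)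
    (unit : Fin n → Fin n → ℝ) (hunit : ∀ i, unit i = Pi.single i 1) :
    ∀ I θ : Fin n → ℝ,
      (∑ i, (fderiv ℝ (fun θ' => F I θ') θ (unit i) *
               fderiv ℝ (fun I' => N I') I (unit i)
           - fderiv ℝ (fun I' => F I' θ) I (unit i) *
               fderiv ℝ (fun _ : Fin n → ℝ => N I) θ (unit i))) =
        P I θ - Pavg I θ :=
  stmt12_general n v q hv e N hN P hP hper Pavg F hPavg hF unit hunit
end
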